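/- Let H be a measurable group, let 0 < α ≤ 1, let μ₀ be a probability measure on H, and set μ = α·δ_e + (1−α)·μ₀. Then for every n ≥ 0, the total variation norm satisfies ‖μ^n − μ^{n+1}‖ ≤ Σ_{i=0}^{n+1} |C(n,i) α^{n−i} (1−α)^i − C(n+1,i) α^{n+1−i} (1−α)^i|, with the convention C(n,i) = 0 for i > n. -/

import Mathlib

open MeasureTheory

/-- The `n`-fold convolution power of a measure on a measurable group,
with `μ^0` the Dirac mass at the identity. -/
noncomputable def convPow {H : Type*} [Group H] [MeasurableSpace H]
    (μ : Measure H) : ℕ → Measure H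
  | 0 => Measure.dirac 1
  | n + 1 => (convPow μ n).mconv μ

instance convPow.isProbabilityMeasure {H : Type*} [Group H] [MeasurableSpace H]
    [MeasurableMul₂ H] (μ : Measure H) [IsProbabilityMeasure μ] :
    ∀ n, IsProbabilityMeasure (convPow μ n)
  | 0 => by rw [convPow]; infer_instance
  | n + 1 => by
      rw [convPow]
      have := convPow.isProbabilityMeasure μ n
      infer_instance

/-! With `ν i = μ₀^i`, the identity `ν i ∗ μ = α • ν i + (1 - α) • ν (i + 1)` makes the convolution
powers of `μ` expand binomially: `μ^n = ∑ i, C(n,i) α^(n-i) (1-α)^i • ν i`. So `μ^n - μ^(n+1)` is a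
signed combination of the probability measures `ν i`, and subadditivity of the total variation
together with `‖c • ν i‖ = |c|` bounds it by the sum of the absolute values of the coefficients. -/

open Finset
open scoped NNReal ENNReal

namespace MeasureTheory

theorem Measure.finsetSum_mconv {M ι : Type*} [Monoid M] [MeasurableSpace M] [MeasurableMul₂ M]
    (s : Finset ι) (μ : ι → Measure M) (ν : Measure M) [SFinite ν] :
    (∑ i ∈ s, μ i) ∗ₘ ν = ∑ i ∈ s, μ i ∗ₘ ν := by
  ext t ht
  have hmul : MeasurableSet ((fun p : M × M ↦ p.1 * p.2) ⁻¹' t) := measurable_mul ht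
  simp only [Measure.mconv, Measure.finsetSum_apply, Measure.map_apply measurable_mul ht,
    Measure.prod_apply hmul, lintegral_finsetSum_measure]

theorem Measure.toSignedMeasure_finsetSum {X ι : Type*} [MeasurableSpace X] (s : Finset ι)
    (μ : ι → Measure X) [∀ i, IsFiniteMeasure (μ i)] :
    (∑ i ∈ s, μ i).toSignedMeasure = ∑ i ∈ s, (μ i).toSignedMeasure := by
  classical
  induction s using Finset.induction_on with
  | empty => simp
  | insert i s hi ih => simp only [sum_insert hi, Measure.toSignedMeasure_add, ih]

theorem SignedMeasure.totalVariation_toSignedMeasure_sum_smul_sub_le {X ι : Type*}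
    [MeasurableSpace X] (s : Finset ι) (ν : ι → Measure X) [∀ i, IsFiniteMeasure (ν i)]
    (c d : ι → ℝ≥0) :
    ((∑ i ∈ s, c i • ν i).toSignedMeasure - (∑ i ∈ s, d i • ν i).toSignedMeasure).totalVariation
      ≤ ∑ i ∈ s, ‖(c i : ℝ) - d i‖₊ • ν i := by
  have hdiff : (∑ i ∈ s, c i • ν i).toSignedMeasure - (∑ i ∈ s, d i • ν i).toSignedMeasure
      = ∑ i ∈ s, ((c i : ℝ) - d i) • (ν i).toSignedMeasure := by
    simp only [Measure.toSignedMeasure_finsetSum, Measure.toSignedMeasure_smul, NNReal.smul_def,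
      ← sum_sub_distrib]
    exact sum_congr rfl fun i _ ↦ (sub_smul _ _ _).symm
  rw [hdiff, SignedMeasure.totalVariation_eq_variation]
  refine (VectorMeasure.variation_finsetSum_le _ _).trans_eq ?_
  simp [VectorMeasure.variation_smul]

end MeasureTheory

def binomialWeight {R : Type*} [CommSemiring R] (a b : R) (n i : ℕ) : R :=
  n.choose i * a ^ (n - i) * b ^ i

section binomialWeight

variable {R : Type*} [CommSemiring R] (a b : R)

theorem binomialWeight_of_lt {n i : ℕ} (h : n < i) : binomialWeight a b n i = 0 := by
  simp [binomialWeight, Nat.choose_eq_zero_of_lt h]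

theorem binomialWeight_succ_zero (n : ℕ) :
    binomialWeight a b (n + 1) 0 = a * binomialWeight a b n 0 := by
  simp [binomialWeight, pow_succ, mul_comm]

theorem binomialWeight_succ_succ (n i : ℕ) :
    binomialWeight a b (n + 1) (i + 1)
      = a * binomialWeight a b n (i + 1) + b * binomialWeight a b n i := by
  have hshift : (n.choose (i + 1) : R) * a ^ (n - i)
      = a * (n.choose (i + 1) * a ^ (n - (i + 1))) := by
    rcases Nat.lt_or_ge i n with hin | hni
    · rw [show n - i = n - (i + 1) + 1 by omega]; ring
    · simp [Nat.choose_eq_zero_of_lt (Nat.lt_succ_of_le hni)]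
  simp only [binomialWeight, Nat.choose_succ_succ, Nat.cast_add, Nat.add_sub_add_right, add_mul,
    hshift]
  ring

theorem map_binomialWeight {S : Type*} [CommSemiring S] (f : R →+* S) (n i : ℕ) :
    f (binomialWeight a b n i) = binomialWeight (f a) (f b) n i := by
  simp [binomialWeight]

end binomialWeight

instance convPow.sFinite {H : Type*} [Group H] [MeasurableSpace H] [MeasurableMul₂ H]
    (μ : Measure H) [SFinite μ] : ∀ n, SFinite (convPow μ n)
  | 0 => by rw [convPow]; infer_instance
  | n + 1 => by
      rw [convPow]
      have := convPow.sFinite μ n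
      infer_instance

theorem convPow_smul_dirac_add_smul {H : Type*} [Group H] [MeasurableSpace H]
    [MeasurableMul₂ H] (a b : ℝ≥0∞) (μ₀ : Measure H) [SFinite μ₀] (n : ℕ) :
    convPow (a • Measure.dirac 1 + b • μ₀) n
      = ∑ i ∈ range (n + 1), binomialWeight a b n i • convPow μ₀ i := by
  set μ := a • Measure.dirac (1 : H) + b • μ₀
  set ν := convPow μ₀
  set w := binomialWeight a b
  have hstep (i : ℕ) : ν i ∗ₘ μ = a • ν i + b • ν (i + 1) := by
    rw [Measure.mconv_add, Measure.mconv_smul_right, Measure.mconv_smul_right,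
      Measure.mconv_dirac_one]
    rfl
  induction n with
  | zero => simp [ν, w, convPow, binomialWeight]
  | succ n ih =>
    calc convPow μ (n + 1)
        = ∑ i ∈ range (n + 1), (a * w n i) • ν i
          + ∑ i ∈ range (n + 1), (b * w n i) • ν (i + 1) := by
          simp only [convPow, ih, Measure.finsetSum_mconv, Measure.mconv_smul_left, hstep,
            smul_add, smul_smul, sum_add_distrib, mul_comm]
      _ = (a * w n 0) • ν 0 + ∑ i ∈ range (n + 1), (a * w n (i + 1)) • ν (i + 1)
          + ∑ i ∈ range (n + 1), (b * w n i) • ν (i + 1) := by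
          have hlast : w n (n + 1) = 0 := binomialWeight_of_lt _ _ n.lt_succ_self
          rw [add_comm ((a * w n 0) • ν 0), ← sum_range_succ' (fun i ↦ (a * w n i) • ν i),
            sum_range_succ _ (n + 1), hlast, mul_zero, zero_smul, add_zero]
      _ = ∑ i ∈ range (n + 2), w (n + 1) i • ν i := by
          rw [sum_range_succ' _ (n + 1)]
          simp only [w, binomialWeight_succ_zero, binomialWeight_succ_succ, add_smul,
            sum_add_distrib]
          abel

/-- If `μ = α·δ_e + (1−α)·μ₀` with `0 < α ≤ 1` and `μ₀` a probability measure, then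
`‖μ^n − μ^{n+1}‖ ≤ Σ_{i=0}^{n+1} |C(n,i) α^{n−i} (1−α)^i − C(n+1,i) α^{n+1−i} (1−α)^i|`,
with the convention `C(n,i) = 0` for `i > n`. -/
theorem stmt3 {H : Type*} [Group H] [MeasurableSpace H] [MeasurableMul₂ H]
    (α : ℝ) (hα : 0 < α) (hα1 : α ≤ 1)
    (μ₀ : Measure H) [IsProbabilityMeasure μ₀]
    (μ : Measure H)
    (hμ : μ = ENNReal.ofReal α • Measure.dirac (1 : H) + ENNReal.ofReal (1 - α) • μ₀)
    (hprob : IsProbabilityMeasure μ)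
    (n : ℕ) :
    ((convPow μ n).toSignedMeasure
        - (convPow μ (n + 1)).toSignedMeasure).totalVariation Set.univ
      ≤ ENNReal.ofReal (∑ i ∈ Finset.range (n + 2),
          |(n.choose i : ℝ) * α ^ (n - i) * (1 - α) ^ i
            - ((n + 1).choose i : ℝ) * α ^ (n + 1 - i) * (1 - α) ^ i|) := by
  set p := α.toNNReal
  set q := (1 - α).toNNReal
  have hexp (m : ℕ) (hm : m ≤ n + 1) :
      convPow μ m = ∑ i ∈ range (n + 2), binomialWeight p q m i • convPow μ₀ i := by
    have hvanish : ∀ i ∈ range (n + 2), i ∉ range (m + 1) →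
        binomialWeight p q m i • convPow μ₀ i = 0 := fun i _ hi ↦ by
      rw [binomialWeight_of_lt _ _ (by simpa using hi), zero_smul]
    rw [← sum_subset (range_subset_range.2 (by omega)) hvanish, hμ, convPow_smul_dirac_add_smul]
    refine sum_congr rfl fun i _ ↦ ?_
    rw [← Measure.coe_nnreal_smul]
    -- `ENNReal.ofReal α` is definitionally `↑α.toNNReal`
    exact congrArg (· • _) (map_binomialWeight p q ENNReal.ofNNRealHom m i).symm
  have hcoe (m i : ℕ) :
      ((binomialWeight p q m i : ℝ≥0) : ℝ) = m.choose i * α ^ (m - i) * (1 - α) ^ i := by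
    rw [← NNReal.coe_toRealHom, map_binomialWeight]
    simp [binomialWeight, p, q, hα.le, hα1]
  rw [Measure.toSignedMeasure_congr (hexp n n.le_succ),
    Measure.toSignedMeasure_congr (hexp (n + 1) le_rfl)]
  calc _ ≤ (∑ i ∈ range (n + 2),
          ‖((binomialWeight p q n i : ℝ≥0) : ℝ) - (binomialWeight p q (n + 1) i : ℝ≥0)‖₊
            • convPow μ₀ i) Set.univ :=
        SignedMeasure.totalVariation_toSignedMeasure_sum_smul_sub_le _ _ _ _ _
    _ = _ := by
        simp [Measure.finsetSum_apply, hcoe, ENNReal.ofReal_sum_of_nonneg, ← enorm_eq_nnnorm,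
          Real.enorm_eq_ofReal_abs]
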